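/- Let β : 𝒫^n → ℝ≥0 be a probability distribution over full-weight Pauli measurement bases (𝒫 = {X,Y,Z}), and for a Pauli operator P define ζ(P,β) = Σ_{B ∈ Lift(P)} β(B), where Lift(P) is the set of B ∈ 𝒫^n with B_i = P_i whenever P_i ≠ I. If H = Σ_P α_P P and β is compatible with H (i.e., ζ(P,β) > 0 whenever α_P ≠ 0), then the single-shot estimator ν = Σ_P α_P · 𝟙_{Lift(P)}(B) / ζ(P,β) · μ(B, supp(P)) satisfies E(ν) = Σ_P α_P Tr(P ρ) = Tr(H ρ), where the expectation is over B drawn from β and measurement outcomes μ(B,i) ∈ {±1} with E_{μ(B)} μ(B, supp(P)) = Tr(P ρ) whenever B ∈ Lift(P). -/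

import Mathlib

/-- Single-qubit Pauli operators {I, X, Y, Z}. -/
inductive PauliOp : Type
  | I | X | Y | Z
deriving DecidableEq

instance : Fintype PauliOp :=
  ⟨{PauliOp.I, PauliOp.X, PauliOp.Y, PauliOp.Z}, fun x => by cases x <;> simp⟩

/-- Single-qubit measurement bases 𝒫 = {X, Y, Z} (traceless Paulis). -/
inductive PauliBasis : Type
  | X | Y | Z
deriving DecidableEq

instance : Fintype PauliBasis :=
  ⟨{PauliBasis.X, PauliBasis.Y, PauliBasis.Z}, fun x => by cases x <;> simp⟩

instance : Inhabited PauliBasis := ⟨PauliBasis.X⟩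

def PauliBasis.toPauli : PauliBasis → PauliOp
  | .X => .X
  | .Y => .Y
  | .Z => .Z

/-- The (non-identity) Pauli as a basis; junk value `X` on `I`. -/
def PauliOp.toBasis : PauliOp → PauliBasis
  | .I => .X
  | .X => .X
  | .Y => .Y
  | .Z => .Z

/-- `Lift P`: measurement bases `B ∈ 𝒫^n` with `B_i = P_i` whenever `P_i ≠ I`. -/
def Lift {n : ℕ} (P : Fin n → PauliOp) : Finset (Fin n → PauliBasis) :=
  Finset.univ.filter fun B => ∀ i, P i ≠ PauliOp.I → (B i).toPauli = P i

/-- Support of a Pauli operator: qubits where it is not the identity. -/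
def psupp {n : ℕ} (P : Fin n → PauliOp) : Finset (Fin n) :=
  Finset.univ.filter fun i => P i ≠ PauliOp.I

/-- ζ(P,β) = Σ_{B ∈ Lift(P)} β(B). -/
def zeta {n : ℕ} (P : Fin n → PauliOp) (β : (Fin n → PauliBasis) → ℝ) : ℝ :=
  ∑ B ∈ Lift P, β B

/-!
Exchanging the two sums, the contribution of a Pauli `P` is `α P` times a
`β`-average of `Eμ B (supp P) / ζ(P,β)` over `B ∈ Lift P`; there `Eμ` is constantly
`Tr(Pρ)`, and the importance weight `1 / ζ(P,β)` cancels the `β`-mass of `Lift P`.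
-/

open Finset

theorem sum_mul_indicator_div_sum_mul {ι K : Type*} [Fintype ι] [DecidableEq ι] [Field K]
    (s : Finset ι) (w f : ι → K) (c : K) (hs : ∑ j ∈ s, w j ≠ 0) (hf : ∀ i ∈ s, f i = c) :
    ∑ i, w i * ((if i ∈ s then 1 else 0) / (∑ j ∈ s, w j) * f i) = c := by
  have hterm : ∀ i, w i * ((if i ∈ s then 1 else 0) / (∑ j ∈ s, w j) * f i)
      = if i ∈ s then w i * c / ∑ j ∈ s, w j else 0 := by
    intro i
    split_ifs with hi
    · rw [hf i hi]; ring
    · simp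
  rw [sum_congr rfl fun i _ => hterm i, sum_ite_mem, univ_inter, ← sum_div, ← sum_mul,
    mul_div_right_comm, div_self hs, one_mul]

/-- `tr P` stands for Tr(Pρ), and `Eμ B A` for the outcome expectation E_{μ(B)} μ(B,A). -/
theorem statement0_general {n : ℕ} (β : (Fin n → PauliBasis) → ℝ)
    (α tr : (Fin n → PauliOp) → ℝ)
    (hcompat : ∀ P, α P ≠ 0 → 0 < zeta P β)
    (Eμ : (Fin n → PauliBasis) → Finset (Fin n) → ℝ)
    (hEμ : ∀ (P : Fin n → PauliOp), ∀ B ∈ Lift P, Eμ B (psupp P) = tr P) :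
    ∑ B, β B * ∑ P, α P * ((if B ∈ Lift P then (1:ℝ) else 0) / zeta P β)
        * Eμ B (psupp P)
      = ∑ P, α P * tr P := by
  calc ∑ B, β B * ∑ P, α P * ((if B ∈ Lift P then (1:ℝ) else 0) / zeta P β) * Eμ B (psupp P)
      = ∑ P, α P * ∑ B, β B * ((if B ∈ Lift P then 1 else 0) / zeta P β * Eμ B (psupp P)) := by
        simp_rw [mul_sum]
        rw [sum_comm]
        congr! 2
        ring
    _ = ∑ P, α P * tr P := by
        refine sum_congr rfl fun P _ => ?_
        by_cases hα : α P = 0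
        · simp [hα]
        · exact congrArg (α P * ·)
            (sum_mul_indicator_div_sum_mul (Lift P) β _ (tr P) (hcompat P hα).ne' (hEμ P))

/-- Unbiasedness of the single-shot shallow-measurement estimator:
if β is compatible with H = Σ_P α_P P, then E(ν) = Σ_P α_P Tr(Pρ).
Here `tr P` stands for Tr(Pρ), and `Eμ B A` abstracts the expectation
E_{μ(B)} μ(B,A) over measurement outcomes in basis B, with the property
that `Eμ B (supp P) = Tr(Pρ)` whenever `B ∈ Lift P`. -/
theorem statement0 {n : ℕ} (β : (Fin n → PauliBasis) → ℝ)
    (α tr : (Fin n → PauliOp) → ℝ)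
    (hβ0 : ∀ B, 0 ≤ β B) (hβ1 : ∑ B, β B = 1)
    (hcompat : ∀ P, α P ≠ 0 → 0 < zeta P β)
    (Eμ : (Fin n → PauliBasis) → Finset (Fin n) → ℝ)
    (hEμ : ∀ (P : Fin n → PauliOp), ∀ B ∈ Lift P, Eμ B (psupp P) = tr P) :
    ∑ B, β B * ∑ P, α P * ((if B ∈ Lift P then (1:ℝ) else 0) / zeta P β)
        * Eμ B (psupp P)
      = ∑ P, α P * tr P :=
  statement0_general β α tr hcompat Eμ hEμ
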